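/- arXiv:2405.19023 — 2 statements merged into one kernel-verified Lean document; each statement's English description precedes it below -/
import Mathlib

section
/- Let A be an Artin algebra. If (I, J) is an ideal torsion pair and 0 → L →^φ M →^ψ N → 0 is a short exact sequence with φ ∈ I and ψ ∈ J, then φ is a right I-approximation of M (every morphism X → M in I factors through φ) and ψ is a left J-approximation of M (every morphism M → Y in J factors through ψ). -/
open CategoryTheory

universe u

variable (k : Type u) [CommRing k] [IsArtinianRing k]
variable (A : Type u) [Ring A] [Algebra k A] [Module.Finite k A]

/-- A class of morphisms of `mod A`, the category of finitely generated `A`-modules. -/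
abbrev MorClass := ∀ (M N : FGModuleCat.{u} A), Set (M ⟶ N)

/-- An ideal of `mod A`: a class of morphisms closed under addition of parallel morphisms
and under composition with arbitrary morphisms on either side. -/
def IsMorIdeal (I : MorClass A) : Prop :=
  (∀ {M N : FGModuleCat.{u} A} {f g : M ⟶ N}, f ∈ I M N → g ∈ I M N → f + g ∈ I M N) ∧
  (∀ {M N P : FGModuleCat.{u} A} (f : M ⟶ N) {g : N ⟶ P}, g ∈ I N P → f ≫ g ∈ I M P) ∧
  (∀ {M N P : FGModuleCat.{u} A} {f : M ⟶ N} (g : N ⟶ P), f ∈ I M N → f ≫ g ∈ I M P)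

/-- `I^⊥`: all morphisms `ψ` with `ψ ∘ φ = 0` for every `φ ∈ I`. -/
def rightPerp (I : MorClass A) : MorClass A :=
  fun N P => {ψ | ∀ (M : FGModuleCat.{u} A) (φ : M ⟶ N), φ ∈ I M N → φ ≫ ψ = 0}

/-- `⊥J`: all morphisms `φ` with `ψ ∘ φ = 0` for every `ψ ∈ J`. -/
def leftPerp (J : MorClass A) : MorClass A :=
  fun M N => {φ | ∀ (P : FGModuleCat.{u} A) (ψ : N ⟶ P), ψ ∈ J N P → φ ≫ ψ = 0}

/-- `(I, J)` is an ideal torsion pair. -/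
def IsIdealTorsionPair (I J : MorClass A) : Prop :=
  IsMorIdeal A I ∧ IsMorIdeal A J ∧
  (∀ {M N P : FGModuleCat.{u} A} (φ : M ⟶ N) (ψ : N ⟶ P), φ ∈ I M N → ψ ∈ J N P → φ ≫ ψ = 0) ∧
  (∀ M : FGModuleCat.{u} A, ∃ (L N : FGModuleCat.{u} A) (φ : L ⟶ M) (ψ : M ⟶ N),
    φ ∈ I L M ∧ ψ ∈ J M N ∧ Function.Injective φ ∧ Function.Surjective ψ ∧
    LinearMap.range φ.hom.hom = LinearMap.ker ψ.hom.hom)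

/-- If `(I, J)` is an ideal torsion pair and `0 → L →φ M →ψ N → 0` is a short exact
sequence with `φ ∈ I` and `ψ ∈ J`, then `φ` is a right `I`-approximation of `M` and
`ψ` is a left `J`-approximation of `M`. -/
theorem ses_gives_approximations (I J : MorClass A) (h : IsIdealTorsionPair A I J)
    (L M N : FGModuleCat.{u} A) (φ : L ⟶ M) (ψ : M ⟶ N)
    (hφ : φ ∈ I L M) (hψ : ψ ∈ J M N)
    (hmono : Function.Injective φ) (hepi : Function.Surjective ψ)
    (hexact : LinearMap.range φ.hom.hom = LinearMap.ker ψ.hom.hom) :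
    (∀ (X : FGModuleCat.{u} A) (α : X ⟶ M), α ∈ I X M → ∃ β : X ⟶ L, β ≫ φ = α) ∧
    (∀ (Y : FGModuleCat.{u} A) (γ : M ⟶ Y), γ ∈ J M Y → ∃ δ : N ⟶ Y, ψ ≫ δ = γ) := by
  obtain ⟨-, -, hperp, -⟩ := h
  constructor
  · intro X α hα
    have hz : α ≫ ψ = 0 := hperp α ψ hα hψ
    have hmem : ∀ x : X, α x ∈ LinearMap.range φ.hom.hom := by
      intro x
      rw [hexact]
      have := congrArg (fun f => f.hom.hom x) hz
      simp at this
      exact this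
    let e := LinearEquiv.ofInjective φ.hom.hom hmono
    refine ⟨ConcreteCategory.ofHom (e.symm.toLinearMap.comp
      (α.hom.hom.codRestrict _ hmem) : X.obj →ₗ[A] L.obj), ?_⟩
    ext x
    have : φ (e.symm ⟨α x, hmem x⟩) = α x := by
      have := e.apply_symm_apply ⟨α x, hmem x⟩
      exact congrArg Subtype.val this
    exact this
  · intro Y γ hγ
    have hz : φ ≫ γ = 0 := hperp φ γ hφ hγ
    have hle : LinearMap.ker ψ.hom.hom ≤
        LinearMap.ker γ.hom.hom := by
      intro m hm
      rw [← hexact] at hm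
      obtain ⟨l, rfl⟩ := hm
      have := congrArg (fun f => f.hom.hom l) hz
      simpa using this
    let q := ψ.hom.hom.quotKerEquivOfSurjective hepi
    refine ⟨ConcreteCategory.ofHom (((LinearMap.ker ψ.hom.hom).liftQ _ hle).comp
        q.symm.toLinearMap : N.obj →ₗ[A] Y.obj), ?_⟩
    apply ConcreteCategory.hom_ext
    intro m
    have hq : q.symm (ψ m) = Submodule.Quotient.mk m := by
      apply q.injective
      rw [q.apply_symm_apply]
      rfl
    show (LinearMap.ker ψ.hom.hom).liftQ _ hle (q.symm (ψ m)) = γ m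
    rw [hq]
    rfl
end

section
/- Let A be an Artin algebra and (I, J) an ideal torsion pair with corresponding subfunctor t of the identity functor. Then I equals the ideal ⟨ob I⟩ of morphisms factoring through a module M with 1_M ∈ I if and only if t∘t = t; and in that case tM ∈ ob I for every module M. -/
open CategoryTheory

universe u

variable (k : Type u) [CommRing k] [IsArtinianRing k]
variable (A : Type u) [Ring A] [Algebra k A] [Module.Finite k A] [IsNoetherianRing A]

/-- `⟨C⟩`: the ideal of all morphisms factoring through an object of the class `C`. -/
def factorClass (C : Set (FGModuleCat.{u} A)) : MorClass A :=
  fun M N => {φ | ∃ X : FGModuleCat.{u} A, X ∈ C ∧ ∃ (g : M ⟶ X) (h : X ⟶ N), g ≫ h = φ}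

/-- `ob I`: the class of modules whose identity morphism belongs to `I`. -/
def obClass (I : MorClass A) : Set (FGModuleCat.{u} A) := {M | 𝟙 M ∈ I M M}

/-- A subfunctor `t` of the identity functor on `mod A`. -/
structure IdSubfunctor where
  toFun : ∀ M : FGModuleCat.{u} A, Submodule A M
  map_le : ∀ {M N : FGModuleCat.{u} A} (f : M ⟶ N), (toFun M).map f.hom.hom ≤ toFun N

/-- The torsion ideal associated to a subfunctor of the identity. -/
def iIdeal (t : IdSubfunctor A) : MorClass A :=
  fun L M => {φ | LinearMap.range φ.hom.hom ≤ t.toFun M}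

/-- The torsion-free ideal associated to a subfunctor of the identity. -/
def jIdeal (t : IdSubfunctor A) : MorClass A :=
  fun M N => {ψ | t.toFun M ≤ LinearMap.ker ψ.hom.hom}

instance (M : FGModuleCat.{u} A) (S : Submodule A M) : Module.Finite A S :=
  Module.Finite.iff_fg.mpr (IsNoetherian.noetherian S)

/-- For the ideal torsion pair `(I, J)` corresponding to a subfunctor `t` of the identity:
`I = ⟨ob I⟩` iff `t ∘ t = t` (i.e. `t (t M) = t M` inside `M` for every `M`), and in
that case `t M ∈ ob I` for every module `M`. -/
theorem iIdeal_eq_factor_obClass_iff_idem (t : IdSubfunctor A) :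
    ((∀ M N : FGModuleCat.{u} A,
        iIdeal A t M N = factorClass A (obClass A (iIdeal A t)) M N) ↔
      (∀ M : FGModuleCat.{u} A,
        Submodule.map (t.toFun M).subtype
          (t.toFun (FGModuleCat.of A (t.toFun M))) = t.toFun M)) ∧
    ((∀ M : FGModuleCat.{u} A,
        Submodule.map (t.toFun M).subtype
          (t.toFun (FGModuleCat.of A (t.toFun M))) = t.toFun M) →
      ∀ M : FGModuleCat.{u} A,
        FGModuleCat.of A (t.toFun M) ∈ obClass A (iIdeal A t)) := by
  -- key : idempotency implies `t M ∈ ob I`.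
  have key : (∀ M : FGModuleCat A,
        Submodule.map (t.toFun M).subtype
          (t.toFun (FGModuleCat.of A (t.toFun M))) = t.toFun M) →
      ∀ M : FGModuleCat A,
        FGModuleCat.of A (t.toFun M) ∈ obClass A (iIdeal A t) := by
    intro h M
    show LinearMap.range (ModuleCat.Hom.hom (InducedCategory.Hom.hom (𝟙 (FGModuleCat.of A (t.toFun M))))) ≤ _
    rw [show ((ModuleCat.Hom.hom (InducedCategory.Hom.hom (𝟙 (FGModuleCat.of A (t.toFun M))))) :
          t.toFun M →ₗ[A] t.toFun M) = LinearMap.id from rfl, LinearMap.range_id]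
    intro x _
    have hx : ((show t.toFun M from x) : M) ∈
        Submodule.map (t.toFun M).subtype (t.toFun (FGModuleCat.of A (t.toFun M))) :=
      (h M).ge (show t.toFun M from x).2
    obtain ⟨y, hy, hxy⟩ := hx
    rwa [show x = y from (Subtype.ext hxy.symm)]
  refine ⟨⟨?_, ?_⟩, key⟩
  · -- I = ⟨ob I⟩ → idempotency
    intro heq M
    -- the inclusion ι : t M → M lies in I
    set ι : FGModuleCat.of A (t.toFun M) ⟶ M := FGModuleCat.ofHom (t.toFun M).subtype with hι
    have hιI : ι ∈ iIdeal A t (FGModuleCat.of A (t.toFun M)) M := by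
      show LinearMap.range ((t.toFun M).subtype) ≤ t.toFun M
      rw [Submodule.range_subtype]
    rw [heq] at hιI
    obtain ⟨X, hX, g, h, hgh⟩ := hιI
    -- range h ≤ t M, so h corestricts to h' : X ⟶ t M
    have hXtop : (⊤ : Submodule A X) ≤ t.toFun X := by
      have h2 : LinearMap.range (ModuleCat.Hom.hom (InducedCategory.Hom.hom (𝟙 X))) ≤ t.toFun X := hX
      rwa [show ((ModuleCat.Hom.hom (InducedCategory.Hom.hom (𝟙 X))) : X →ₗ[A] X) = LinearMap.id from rfl, LinearMap.range_id] at h2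
    have hrange : LinearMap.range (h.hom.hom : X →ₗ[A] M) ≤ t.toFun M := by
      calc LinearMap.range (h.hom.hom : X →ₗ[A] M)
          = Submodule.map h.hom.hom ⊤ := (Submodule.map_top _).symm
        _ ≤ Submodule.map h.hom.hom (t.toFun X) := Submodule.map_mono hXtop
        _ ≤ t.toFun M := t.map_le h
    set h' : X ⟶ FGModuleCat.of A (t.toFun M) :=
      FGModuleCat.ofHom (LinearMap.codRestrict (t.toFun M) h.hom.hom (fun x => hrange ⟨x, rfl⟩)) with hh'
    -- g ≫ h' = 𝟙, since ι ∘ (g ≫ h') = ι and ι is injective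
    have hgh' : ∀ x : t.toFun M, h'.hom.hom (g.hom.hom x) = x := by
      intro x
      apply Subtype.ext
      show h.hom.hom (g.hom.hom x) = (x : M)
      have := congrArg (fun f : FGModuleCat.of A (t.toFun M) ⟶ M => f.hom.hom x) hgh
      exact this
    -- conclude idempotency
    apply le_antisymm
    · rintro x ⟨y, _, rfl⟩
      exact (show t.toFun M from y).2
    · intro x hx
      refine ⟨h'.hom.hom (g.hom.hom ⟨x, hx⟩), ?_, ?_⟩
      · exact t.map_le h' ⟨g.hom.hom ⟨x, hx⟩, hXtop trivial, rfl⟩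
      · have := hgh' ⟨x, hx⟩
        rw [this]
        rfl
  · -- idempotency → I = ⟨ob I⟩
    intro hidem M N
    ext φ
    constructor
    · intro hφ
      have hφ' : LinearMap.range (φ.hom.hom : M →ₗ[A] N) ≤ t.toFun N := hφ
      refine ⟨FGModuleCat.of A (t.toFun N), key hidem N,
        FGModuleCat.ofHom (LinearMap.codRestrict (t.toFun N) φ.hom.hom (fun x => hφ' ⟨x, rfl⟩)),
        FGModuleCat.ofHom (t.toFun N).subtype, rfl⟩
    · rintro ⟨X, hX, g, h, rfl⟩
      have hXtop : (⊤ : Submodule A X) ≤ t.toFun X := by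
        have h2 : LinearMap.range (ModuleCat.Hom.hom (InducedCategory.Hom.hom (𝟙 X))) ≤ t.toFun X := hX
        rwa [show ((ModuleCat.Hom.hom (InducedCategory.Hom.hom (𝟙 X))) : X →ₗ[A] X) = LinearMap.id from rfl, LinearMap.range_id] at h2
      show LinearMap.range ((h.hom.hom : X →ₗ[A] N).comp g.hom.hom) ≤ t.toFun N
      calc LinearMap.range ((h.hom.hom : X →ₗ[A] N).comp g.hom.hom)
          ≤ LinearMap.range (h.hom.hom : X →ₗ[A] N) := LinearMap.range_comp_le_range _ _
        _ = Submodule.map h.hom.hom ⊤ := (Submodule.map_top _).symm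
        _ ≤ Submodule.map h.hom.hom (t.toFun X) := Submodule.map_mono hXtop
        _ ≤ t.toFun N := t.map_le h
end
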